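/- arXiv:1711.00904 — 2 statements merged into one kernel-verified Lean document; each statement's English description precedes it below -/
import Mathlib

section
/- Let K ⊆ L be fields, H ∈ K[x₁,…,xₙ]ⁿ a polynomial map, s ≥ 1, and T ∈ GL_n(L) such that for H̃ := T⁻¹H(Tx), the ideal of L[x] generated by the entries of (J H̃)^s contains a power of a polynomial f. Suppose either #K ≥ deg f + 1, or f is homogeneous and #K ≥ deg f. Then there exists v ∈ Kⁿ with ((J H)|_{x=v})^s ≠ 0. -/
/-!
Suppose `((J H)(v))^s = 0` for every `v ∈ Kⁿ`. Since `(J H̃)(T⁻¹v) = T⁻¹ (J H)(v) T` by the chain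
rule, every entry of `(J H̃)^s`, hence `f`, vanishes at `T⁻¹v`. So `f(T⁻¹x)`, which has degree at
most `deg f` and is homogeneous when `f` is, vanishes on `Kⁿ ⊆ Lⁿ`. Applying the `K`-linear
functionals `L → K` to its coefficients turns it into polynomials over `K` that vanish on all of
`Kⁿ`, and these are zero by the Combinatorial Nullstellensatz (resp. its homogeneous variant,
which only needs `#K ≥ deg`). Hence `f(T⁻¹x) = 0`, and so `f = 0`.
-/

open MvPolynomial Matrix

namespace MvPolynomial

section MapCoeffs

variable {σ R S : Type*} [CommSemiring R] [CommSemiring S]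

noncomputable def mapCoeffs (g : R →+ S) : MvPolynomial σ R →+ MvPolynomial σ S where
  toFun f := AddMonoidAlgebra.map g f
  map_zero' := AddMonoidAlgebra.map_zero g
  map_add' := AddMonoidAlgebra.map_add g

@[simp]
theorem coeff_mapCoeffs (g : R →+ S) (f : MvPolynomial σ R) (m : σ →₀ ℕ) :
    coeff m (mapCoeffs g f) = g (coeff m f) := rfl

theorem mapCoeffs_monomial (g : R →+ S) (m : σ →₀ ℕ) (a : R) :
    mapCoeffs g (monomial m a) = monomial m (g a) := by
  classical
  ext m'
  rw [coeff_mapCoeffs, coeff_monomial, coeff_monomial]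
  split_ifs <;> simp

theorem support_mapCoeffs_subset (g : R →+ S) (f : MvPolynomial σ R) :
    (mapCoeffs g f).support ⊆ f.support := by
  intro m hm
  rw [mem_support_iff] at hm ⊢
  exact fun h ↦ hm (by rw [coeff_mapCoeffs, h, map_zero])

theorem totalDegree_mapCoeffs_le (g : R →+ S) (f : MvPolynomial σ R) :
    (mapCoeffs g f).totalDegree ≤ f.totalDegree :=
  Finset.sup_mono (support_mapCoeffs_subset g f)

theorem IsHomogeneous.mapCoeffs {f : MvPolynomial σ R} {d : ℕ} (hf : f.IsHomogeneous d)
    (g : R →+ S) : (mapCoeffs g f).IsHomogeneous d := fun _ hm ↦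
  hf (mem_support_iff.mp (support_mapCoeffs_subset g f (mem_support_iff.mpr hm)))

theorem eval_mapCoeffs [Algebra R S] (φ : S →ₗ[R] R) (f : MvPolynomial σ S) (v : σ → R) :
    eval v (mapCoeffs φ.toAddMonoidHom f) = φ (eval (algebraMap R S ∘ v) f) := by
  induction f using MvPolynomial.induction_on' with
  | monomial m a =>
    rw [mapCoeffs_monomial, eval_monomial, eval_monomial]
    simp only [Function.comp_apply, ← map_pow, ← map_finsuppProd, mul_comm a, ← Algebra.smul_def,
      map_smul, smul_eq_mul]
    exact mul_comm _ _
  | add p q hp hq => simp only [map_add, hp, hq]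

end MapCoeffs

section Vanishing

open Cardinal

variable {σ : Type*}

theorem eq_zero_of_forall_eval_zero_of_totalDegree_lt_card {R : Type*} [CommRing R] [IsDomain R]
    [Finite σ] (f : MvPolynomial σ R) (h : ∀ v, eval v f = 0)
    (hfR : (f.totalDegree : Cardinal) < #R) : f = 0 := by
  obtain ⟨S, hS⟩ := le_mk_iff_exists_set.mp (natCast_add_one_le_iff.mpr hfR)
  obtain ⟨S, rfl, hScard⟩ := mk_set_eq_nat_iff_finset.mp (by exact_mod_cast hS)
  refine eq_zero_of_eval_zero_at_prod_finset f (fun _ ↦ S) (fun i ↦ ?_) fun v _ ↦ h v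
  exact hScard ▸ Nat.lt_succ_of_le (degreeOf_le_totalDegree f i)

variable {K L : Type*} [Field K] [CommRing L] [Algebra K L] {f : MvPolynomial σ L}

theorem eq_zero_of_forall_mapCoeffs_eq_zero
    (h : ∀ φ : Module.Dual K L, mapCoeffs φ.toAddMonoidHom f = 0) : f = 0 := by
  ext m
  rw [coeff_zero, ← Module.forall_dual_apply_eq_zero_iff K]
  exact fun φ ↦ by simpa using congrArg (coeff m) (h φ)

theorem eq_zero_of_forall_eval_algebraMap_eq_zero_of_totalDegree_lt_card [Finite σ]
    (h : ∀ v : σ → K, eval (algebraMap K L ∘ v) f = 0) (hfK : (f.totalDegree : Cardinal) < #K) :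
    f = 0 := by
  refine eq_zero_of_forall_mapCoeffs_eq_zero (K := K) fun φ ↦ ?_
  refine eq_zero_of_forall_eval_zero_of_totalDegree_lt_card _
    (fun v ↦ by rw [eval_mapCoeffs, h, map_zero]) (lt_of_le_of_lt ?_ hfK)
  exact_mod_cast totalDegree_mapCoeffs_le _ f

theorem IsHomogeneous.eq_zero_of_forall_eval_algebraMap_eq_zero_of_le_card {d : ℕ}
    (hf : f.IsHomogeneous d) (h : ∀ v : σ → K, eval (algebraMap K L ∘ v) f = 0)
    (hdK : (d : Cardinal) ≤ #K) : f = 0 :=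
  eq_zero_of_forall_mapCoeffs_eq_zero (K := K) fun φ ↦
    (hf.mapCoeffs _).eq_zero_of_forall_eval_eq_zero_of_le_card
      (fun v ↦ by rw [eval_mapCoeffs, h, map_zero]) hdK

end Vanishing

section Jacobian

variable {ι κ σ τ R : Type*} [CommSemiring R]

theorem pderiv_bind₁ [Fintype σ] (φ : σ → MvPolynomial τ R) (j : τ) (p : MvPolynomial σ R) :
    pderiv j (bind₁ φ p) = ∑ l, bind₁ φ (pderiv l p) * pderiv j (φ l) := by
  classical
  induction p using MvPolynomial.induction_on with
  | C a => simp
  | add p q hp hq => simp only [map_add, hp, hq, add_mul, Finset.sum_add_distrib]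
  | mul_X p i hp =>
    simp only [map_mul, bind₁_X_right, pderiv_mul, hp, pderiv_X, Pi.single_apply, map_add,
      add_mul, Finset.sum_add_distrib, mul_ite, mul_one, mul_zero, apply_ite (bind₁ φ), map_zero,
      ite_mul, zero_mul, Finset.sum_ite_eq, Finset.mem_univ, if_true, Finset.sum_mul,
      mul_right_comm _ (φ i)]

noncomputable def jacobian (F : ι → MvPolynomial σ R) : Matrix ι σ (MvPolynomial σ R) :=
  .of fun i j ↦ pderiv j (F i)

@[simp]
theorem jacobian_apply (F : ι → MvPolynomial σ R) (i : ι) (j : σ) :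
    jacobian F i j = pderiv j (F i) := rfl

theorem jacobian_bind₁ [Fintype σ] (F : ι → MvPolynomial σ R) (φ : σ → MvPolynomial τ R) :
    jacobian (fun i ↦ bind₁ φ (F i)) = (jacobian F).map (bind₁ φ) * jacobian φ := by
  refine Matrix.ext fun i j ↦ ?_
  simp [pderiv_bind₁, Matrix.mul_apply]

theorem jacobian_sum_C_mul [Fintype κ] (A : Matrix ι κ R) (F : κ → MvPolynomial σ R) :
    jacobian (fun i ↦ ∑ k, C (A i k) * F k) = A.map (C : R →+* MvPolynomial σ R) * jacobian F := by
  refine Matrix.ext fun i j ↦ ?_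
  simp [Matrix.mul_apply]

theorem jacobian_toMvPolynomial [Fintype σ] (M : Matrix ι σ R) :
    jacobian M.toMvPolynomial = M.map C := by
  classical
  refine Matrix.ext fun i j ↦ ?_
  simp [Matrix.toMvPolynomial, ← C_mul_X_eq_monomial, pderiv_X, Pi.single_apply]

theorem map_eval_jacobian_map {S : Type*} [CommSemiring S] (f : R →+* S)
    (F : ι → MvPolynomial σ R) (v : σ → R) :
    (jacobian fun i ↦ map f (F i)).map (eval (f ∘ v)) = ((jacobian F).map (eval v)).map f := by
  refine Matrix.ext fun i j ↦ ?_
  simp [pderiv_map, eval₂_comp]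

end Jacobian

section LinearChange

variable {ι κ σ τ R : Type*} [CommSemiring R]

theorem _root_.Matrix.toMvPolynomial_eq_sum_C_mul_X [Fintype σ] (M : Matrix ι σ R) (i : ι) :
    M.toMvPolynomial i = ∑ j, C (M i j) * X j := by
  simp [Matrix.toMvPolynomial, C_mul_X_eq_monomial]

theorem eval_bind₁_toMvPolynomial [Fintype τ] (T : Matrix σ τ R) (w : τ → R)
    (p : MvPolynomial σ R) : eval w (bind₁ T.toMvPolynomial p) = eval (T *ᵥ w) p := by
  rw [eval, eval₂Hom_bind₁]
  exact congrArg (eval · p) (_root_.funext (T.toMvPolynomial_eval_eq_apply · w))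

theorem totalDegree_bind₁_le {g : σ → MvPolynomial τ R} (hg : ∀ i, (g i).totalDegree ≤ 1)
    (p : MvPolynomial σ R) : (bind₁ g p).totalDegree ≤ p.totalDegree := by
  rw [bind₁, aeval_def, eval₂_eq]
  refine (totalDegree_finsetSum _ _).trans (Finset.sup_le fun m hm ↦ ?_)
  refine (totalDegree_mul _ _).trans ?_
  rw [algebraMap_eq, totalDegree_C, zero_add]
  refine (totalDegree_finsetProd _ _).trans ?_
  calc ∑ i ∈ m.support, (g i ^ m i).totalDegree
      ≤ ∑ i ∈ m.support, m i := Finset.sum_le_sum fun i _ ↦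
        (totalDegree_pow _ _).trans ((Nat.mul_le_mul_left _ (hg i)).trans_eq (mul_one _))
    _ ≤ p.totalDegree := le_totalDegree hm

theorem map_eval_jacobian_linearChange [Fintype κ] [Fintype σ] [Fintype τ] (A : Matrix ι κ R)
    (T : Matrix σ τ R) (F : κ → MvPolynomial σ R) (w : τ → R) :
    (jacobian fun i ↦ ∑ k, C (A i k) * bind₁ T.toMvPolynomial (F k)).map (eval w) =
      A * (jacobian F).map (eval (T *ᵥ w)) * T := by
  rw [jacobian_sum_C_mul, jacobian_bind₁, jacobian_toMvPolynomial, ← Matrix.mul_assoc,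
    Matrix.map_mul, Matrix.map_mul]
  congr 2
  · ext; simp
  · ext; simp [eval_bind₁_toMvPolynomial]
  · ext; simp

end LinearChange

section Conj

variable {n R : Type*} [Fintype n] [DecidableEq n] [CommRing R] {T : Matrix n n R}

theorem bind₁_toMvPolynomial_bind₁_toMvPolynomial_inv (hT : IsUnit T) (p : MvPolynomial n R) :
    bind₁ T.toMvPolynomial (bind₁ T⁻¹.toMvPolynomial p) = p := by
  rw [bind₁_bind₁]
  simp only [← Matrix.toMvPolynomial_mul, T.nonsing_inv_mul ((isUnit_iff_isUnit_det T).mp hT),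
    Matrix.toMvPolynomial_one, bind₁_X_left]
  rfl

theorem map_eval_pow_jacobian_conj (hT : IsUnit T) (F : n → MvPolynomial n R) (x : n → R)
    (s : ℕ) :
    ((jacobian fun i ↦ ∑ k, C (T⁻¹ i k) * bind₁ T.toMvPolynomial (F k)) ^ s).map
        (eval (T⁻¹ *ᵥ x)) = T⁻¹ * (jacobian F).map (eval x) ^ s * T := by
  rw [← RingHom.mapMatrix_apply, map_pow, RingHom.mapMatrix_apply, map_eval_jacobian_linearChange,
    mulVec_mulVec, T.mul_nonsing_inv ((isUnit_iff_isUnit_det T).mp hT), one_mulVec]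
  simpa using Units.conj_pow' hT.unit ((jacobian F).map (eval x)) s

end Conj

theorem eval_eq_zero_of_mem_span_entries {σ ι κ R : Type*} [CommSemiring R]
    {M : Matrix ι κ (MvPolynomial σ R)} {w : σ → R} (hM : M.map (eval w) = 0)
    {p : MvPolynomial σ R} (hp : p ∈ Ideal.span {g | ∃ i j, M i j = g}) : eval w p = 0 := by
  rw [← RingHom.mem_ker]
  refine Ideal.span_le.mpr ?_ hp
  rintro _ ⟨i, j, rfl⟩
  exact congrFun₂ hM i j

end MvPolynomial

theorem exists_point_power_ne_zero_general {K L : Type*} [Field K] [Field L] [Algebra K L]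
    {n : ℕ} (H : Fin n → MvPolynomial (Fin n) K) (s : ℕ)
    (T : Matrix (Fin n) (Fin n) L) (hT : IsUnit T)
    (f : MvPolynomial (Fin n) L) (hf : f ≠ 0)
    (hcard : ((f.totalDegree + 1 : ℕ) : Cardinal) ≤ Cardinal.mk K ∨
      (f.IsHomogeneous f.totalDegree ∧ ((f.totalDegree : ℕ) : Cardinal) ≤ Cardinal.mk K))
    (hideal : ∃ k : ℕ, f ^ (k + 1) ∈ Ideal.span { g | ∃ i j,
      ((Matrix.of fun i j => pderiv j (∑ kk, C (T⁻¹ i kk) *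
          bind₁ (fun l => ∑ t, C (T l t) * X t)
            (MvPolynomial.map (algebraMap K L) (H kk)))) ^ s) i j = g }) :
    ∃ v : Fin n → K, (Matrix.of fun i j => eval v (pderiv j (H i))) ^ s ≠ 0 := by
  by_contra! hnil
  obtain ⟨k, hk⟩ := hideal
  simp only [← Matrix.toMvPolynomial_eq_sum_C_mul_X] at hk
  have hfT (v : Fin n → K) : eval (T⁻¹ *ᵥ (algebraMap K L ∘ v)) f = 0 := by
    have hJ := map_eval_pow_jacobian_conj hT (fun i ↦ map (algebraMap K L) (H i))
      (algebraMap K L ∘ v) s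
    have hJH : (jacobian H).map (eval v) ^ s = 0 := hnil v
    rw [map_eval_jacobian_map, ← RingHom.mapMatrix_apply (algebraMap K L), ← map_pow, hJH,
      map_zero, Matrix.mul_zero, Matrix.zero_mul] at hJ
    exact (pow_eq_zero_iff k.succ_ne_zero).mp (map_pow (eval _) f _ ▸
      eval_eq_zero_of_mem_span_entries hJ hk)
  have hg (v : Fin n → K) : eval (algebraMap K L ∘ v) (bind₁ T⁻¹.toMvPolynomial f) = 0 := by
    rw [eval_bind₁_toMvPolynomial, hfT]
  have hg0 : bind₁ T⁻¹.toMvPolynomial f = 0 := by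
    rcases hcard with hK | ⟨hhom, hK⟩
    · refine eq_zero_of_forall_eval_algebraMap_eq_zero_of_totalDegree_lt_card hg ?_
      refine lt_of_le_of_lt ?_ (Cardinal.natCast_add_one_le_iff.mp (by exact_mod_cast hK))
      exact_mod_cast totalDegree_bind₁_le T⁻¹.toMvPolynomial_totalDegree_le f
    · have hhom' := hhom.aeval T⁻¹.toMvPolynomial T⁻¹.toMvPolynomial_isHomogeneous
      rw [one_mul] at hhom'
      exact hhom'.eq_zero_of_forall_eval_algebraMap_eq_zero_of_le_card hg hK
  exact hf (by rw [← bind₁_toMvPolynomial_bind₁_toMvPolynomial_inv hT f, hg0, map_zero])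

theorem exists_point_power_ne_zero {K L : Type*} [Field K] [Field L] [Algebra K L]
    {n : ℕ} (H : Fin n → MvPolynomial (Fin n) K) (s : ℕ) (hs : 1 ≤ s)
    (T : Matrix (Fin n) (Fin n) L) (hT : IsUnit T)
    (f : MvPolynomial (Fin n) L) (hf : f ≠ 0)
    (hcard : ((f.totalDegree + 1 : ℕ) : Cardinal) ≤ Cardinal.mk K ∨
      (f.IsHomogeneous f.totalDegree ∧ ((f.totalDegree : ℕ) : Cardinal) ≤ Cardinal.mk K))
    (hideal : ∃ k : ℕ, f ^ (k + 1) ∈ Ideal.span { g | ∃ i j,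
      ((Matrix.of fun i j => pderiv j (∑ kk, C (T⁻¹ i kk) *
          bind₁ (fun l => ∑ t, C (T l t) * X t)
            (MvPolynomial.map (algebraMap K L) (H kk)))) ^ s) i j = g }) :
    ∃ v : Fin n → K, (Matrix.of fun i j => eval v (pderiv j (H i))) ^ s ≠ 0 :=
  exists_point_power_ne_zero_general H s T hT f hf hcard hideal
end

section
/- Let char K ≠ 2, c ∈ K nonzero, and H = (x₁x₃ + c x₂x₄, x₂x₃ − x₁x₄, ½x₃² + (c/2)x₄², ½x₁² + (c/2)x₂²) in four variables. Let M ∈ Mat₄(K) be a constant matrix such that det(J H + M) has degree at most 2 as a polynomial in x₁,…,x₄. Then det(J H + M) = 0. -/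
/-!
Write `J(y)` for the Jacobian matrix of `H` at `y`; since `H` is quadratic, `J` is linear in `y`,
and `det J(y) = 0` identically. The degree-4 part of `det (J(x) + M)` is `det J(x) = 0`, and the
vanishing of its degree-3 part is a linear system in the entries of `M` which forces
`M = J(t)` for some `t`. Then `J(x) + M = J(x + t)`, so the determinant vanishes.
-/

open MvPolynomial Matrix

theorem Matrix.det_fin_four {R : Type*} [CommRing R] (A : Matrix (Fin 4) (Fin 4) R) :
    A.det =
      A 0 0 * A 1 1 * A 2 2 * A 3 3 - A 0 0 * A 1 1 * A 2 3 * A 3 2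
      - A 0 0 * A 1 2 * A 2 1 * A 3 3 + A 0 0 * A 1 2 * A 2 3 * A 3 1
      + A 0 0 * A 1 3 * A 2 1 * A 3 2 - A 0 0 * A 1 3 * A 2 2 * A 3 1
      - A 0 1 * A 1 0 * A 2 2 * A 3 3 + A 0 1 * A 1 0 * A 2 3 * A 3 2
      + A 0 1 * A 1 2 * A 2 0 * A 3 3 - A 0 1 * A 1 2 * A 2 3 * A 3 0
      - A 0 1 * A 1 3 * A 2 0 * A 3 2 + A 0 1 * A 1 3 * A 2 2 * A 3 0
      + A 0 2 * A 1 0 * A 2 1 * A 3 3 - A 0 2 * A 1 0 * A 2 3 * A 3 1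
      - A 0 2 * A 1 1 * A 2 0 * A 3 3 + A 0 2 * A 1 1 * A 2 3 * A 3 0
      + A 0 2 * A 1 3 * A 2 0 * A 3 1 - A 0 2 * A 1 3 * A 2 1 * A 3 0
      - A 0 3 * A 1 0 * A 2 1 * A 3 2 + A 0 3 * A 1 0 * A 2 2 * A 3 1
      + A 0 3 * A 1 1 * A 2 0 * A 3 2 - A 0 3 * A 1 1 * A 2 2 * A 3 0
      - A 0 3 * A 1 2 * A 2 0 * A 3 1 + A 0 3 * A 1 2 * A 2 1 * A 3 0 := by
  rw [det_succ_row_zero]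
  simp [Fin.sum_univ_succ, det_fin_three, Fin.succAbove]
  ring

namespace MvPolynomial

variable {σ R : Type*} [CommSemiring R]

theorem totalDegree_pderiv_le (i : σ) (p : MvPolynomial σ R) :
    (pderiv i p).totalDegree ≤ p.totalDegree - 1 := by
  classical
  refine Finset.sup_le fun m hm => ?_
  have hcoeff : coeff (m + Finsupp.single i 1) p ≠ 0 := by
    rw [mem_support_iff, coeff_pderiv] at hm
    exact left_ne_zero_of_mul hm
  have hle := le_totalDegree (mem_support_iff.mpr hcoeff)
  rw [Finsupp.sum_add_index' (fun _ => rfl) (fun _ _ _ => rfl),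
    Finsupp.sum_single_index rfl] at hle
  omega

theorem pderiv_pderiv_pderiv_eq_zero {p : MvPolynomial σ R} (hp : p.totalDegree ≤ 2)
    (i j k : σ) : pderiv i (pderiv j (pderiv k p)) = 0 := by
  have hconst : (pderiv j (pderiv k p)).totalDegree = 0 := by
    have := totalDegree_pderiv_le j (pderiv k p)
    have := totalDegree_pderiv_le k p
    omega
  rw [totalDegree_eq_zero_iff_eq_C.mp hconst, pderiv_C]

end MvPolynomial

section JacobianH

variable {R : Type*} [CommRing R]

noncomputable def quadraticMapH {K : Type*} [Field K] (c : K) : Fin 4 → MvPolynomial (Fin 4) K :=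
  ![X 0 * X 2 + C c * (X 1 * X 3),
    X 1 * X 2 - X 0 * X 3,
    C (2⁻¹ : K) * X 2 ^ 2 + C (c / 2) * X 3 ^ 2,
    C (2⁻¹ : K) * X 0 ^ 2 + C (c / 2) * X 1 ^ 2]

def jacobianH (c : R) (y : Fin 4 → R) : Matrix (Fin 4) (Fin 4) R :=
  !![y 2, c * y 3, y 0, c * y 1;
     -y 3, y 2, y 1, -y 0;
     0, 0, y 2, c * y 3;
     y 0, c * y 1, 0, 0]

theorem jacobian_quadraticMapH {K : Type*} [Field K] (h2 : (2 : K) ≠ 0) (c : K) :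
    (of fun i j => pderiv j (quadraticMapH c i)) = jacobianH (C c) X := by
  have hhalf (a : K) (i : Fin 4) : pderiv i (C a * X i ^ 2) = C (2 * a) * X i := by
    rw [pderiv_C_mul, pderiv_pow, pderiv_X_self, C_mul, map_ofNat]
    ring
  ext i j
  fin_cases i <;> fin_cases j <;>
    simp [quadraticMapH, jacobianH, hhalf, h2, mul_div_cancel₀]

theorem det_jacobianH (c : R) (y : Fin 4 → R) : (jacobianH c y).det = 0 := by
  rw [det_fin_four]
  simp [jacobianH]
  ring

theorem jacobianH_add (c : R) (y z : Fin 4 → R) :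
    jacobianH c (y + z) = jacobianH c y + jacobianH c z := by
  ext i j
  fin_cases i <;> fin_cases j <;> simp [jacobianH] <;> ring

theorem jacobianH_map {S : Type*} [CommRing S] (f : R →+* S) (c : R) (y : Fin 4 → R) :
    (jacobianH c y).map f = jacobianH (f c) (f ∘ y) := by
  ext i j
  fin_cases i <;> fin_cases j <;> simp [jacobianH]

theorem exists_eq_jacobianH_of_totalDegree_det_le_two {K : Type*} [Field K] (h2 : (2 : K) ≠ 0)
    {c : K} (hc : c ≠ 0) (M : Matrix (Fin 4) (Fin 4) K)
    (hdeg : (jacobianH (C c) X + M.map C).det.totalDegree ≤ 2) :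
    ∃ t, M = jacobianH c t := by
  have e i j k := congrArg constantCoeff (pderiv_pderiv_pderiv_eq_zero hdeg i j k)
  -- the third derivatives at `0` are the coefficients of twelve cubic monomials, linear in `M`
  have hlin := And.intro (e 0 1 1) <| And.intro (e 0 0 1) <| And.intro (e 0 1 2) <|
    And.intro (e 0 0 3) <| And.intro (e 0 1 3) <| And.intro (e 0 0 2) <| And.intro (e 0 3 3) <|
    And.intro (e 1 2 3) <| And.intro (e 0 2 3) <| And.intro (e 1 3 3) <|
    And.intro (e 2 2 3) (e 2 3 3)
  simp only [jacobianH, det_fin_four, Matrix.add_apply, of_apply, cons_val', cons_val_zero,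
    cons_val_fin_one, map_apply, cons_val_one, cons_val, zero_add, map_add, map_sub,
    Derivation.leibniz, derivation_C, smul_eq_mul, mul_zero, pderiv_X, ne_eq, Fin.reduceEq,
    not_false_eq_true, Pi.single_eq_of_ne, add_zero, sub_self, Pi.single_eq_same, mul_one, zero_sub,
    map_neg, zero_ne_one, neg_zero, sub_zero, one_ne_zero, map_mul, constantCoeff_C, map_zero,
    mul_eq_zero, mul_neg, neg_add_rev, map_one, constantCoeff_X, sub_neg_eq_add, neg_mul,
    neg_eq_zero] at hlin
  ring_nf at hlin
  simp only [mul_eq_zero, hc, h2, or_self, or_false, neg_eq_zero, false_or] at hlin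
  refine ⟨![M 0 2, M 1 2, M 0 0, -M 1 0], ?_⟩
  ext i j
  fin_cases i <;> fin_cases j <;> simp [jacobianH] <;> grind

end JacobianH

theorem det_jacobian_add_const_eq_zero {K : Type*} [Field K] (h2 : ringChar K ≠ 2)
    (c : K) (hc : c ≠ 0) (M : Matrix (Fin 4) (Fin 4) K) :
    let H : Fin 4 → MvPolynomial (Fin 4) K :=
      ![X 0 * X 2 + C c * (X 1 * X 3),
        X 1 * X 2 - X 0 * X 3,
        C (2⁻¹ : K) * X 2 ^ 2 + C (c / 2) * X 3 ^ 2,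
        C (2⁻¹ : K) * X 0 ^ 2 + C (c / 2) * X 1 ^ 2]
    let N : Matrix (Fin 4) (Fin 4) (MvPolynomial (Fin 4) K) :=
      (Matrix.of fun i j => pderiv j (H i)) + M.map C
    N.det.totalDegree ≤ 2 → N.det = 0 := by
  intro H N hdeg
  have h2' : (2 : K) ≠ 0 := Ring.two_ne_zero h2
  have hN : N = jacobianH (C c) X + M.map C := by
    rw [← jacobian_quadraticMapH h2']
    rfl
  rw [hN] at hdeg ⊢
  obtain ⟨t, rfl⟩ := exists_eq_jacobianH_of_totalDegree_det_le_two h2' hc M hdeg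
  rw [jacobianH_map, ← jacobianH_add, det_jacobianH]
end
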